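/- Let G = (V,E) be a finite multigraph without loops. For each vertex i ∈ V let f_i : [0,1]^E → ℝ be a bounded measurable function that depends only on the coordinates x_e with e an edge incident to i (i.e., f_i(x) = f_i(y) whenever x_e = y_e for every edge e incident to i). Then tr(G,f) := ∫_{[0,1]^E} ∏_{i∈V} f_i(x) dx ≤ ∏_{i∈V} ‖f_i‖₂, where ‖f‖₂ = (∫_{[0,1]^E} f(x)² dx)^{1/2}. -/

import Mathlib

/- STATEMENT 11: The edge-weighting model inequality.  A finite multigraph
   without loops is encoded by a finite vertex type `V`, a finite edge type
   `E`, and an endpoint map `ends : E → V × V` with distinct coordinates;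
   a vertex `i` is incident to an edge `e` iff it is one of its endpoints. -/

open MeasureTheory

noncomputable section

abbrev UI : Type := Set.Icc (0 : ℝ) 1

open Finset
open scoped ENNReal Classical

lemma two_two : Real.HolderConjugate 2 2 := Real.HolderConjugate.two_two

lemma CS2 {α ι : Type*} [MeasurableSpace α] (μ : Measure α) [IsProbabilityMeasure μ]
    (t : Finset ι) (ht : t.card ≤ 2) (G : ι → α → ℝ≥0∞)
    (hG : ∀ i, Measurable (G i)) :
    ∫⁻ a, ∏ i ∈ t, G i a ∂μ ≤ ∏ i ∈ t, (∫⁻ a, (G i a) ^ (2:ℝ) ∂μ) ^ ((1:ℝ)/2) := by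
  interval_cases h : t.card
  · obtain rfl : t = ∅ := Finset.card_eq_zero.mp h
    simp
  · obtain ⟨i, rfl⟩ := Finset.card_eq_one.mp h
    simp only [Finset.prod_singleton]
    calc ∫⁻ a, G i a ∂μ = ∫⁻ a, G i a * (fun _ : α => (1:ℝ≥0∞)) a ∂μ := by simp
      _ ≤ (∫⁻ a, G i a ^ (2:ℝ) ∂μ) ^ ((1:ℝ)/2) * (∫⁻ a, (1:ℝ≥0∞) ^ (2:ℝ) ∂μ) ^ ((1:ℝ)/2) :=
        ENNReal.lintegral_mul_le_Lp_mul_Lq μ two_two (hG i).aemeasurable aemeasurable_const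
      _ = (∫⁻ a, G i a ^ (2:ℝ) ∂μ) ^ ((1:ℝ)/2) := by simp
  · obtain ⟨i, j, hij, rfl⟩ := Finset.card_eq_two.mp h
    rw [Finset.prod_pair hij]
    calc ∫⁻ a, ∏ k ∈ {i, j}, G k a ∂μ = ∫⁻ a, G i a * G j a ∂μ := by
          refine lintegral_congr fun a => ?_
          rw [Finset.prod_pair hij]
      _ ≤ (∫⁻ a, G i a ^ (2:ℝ) ∂μ) ^ ((1:ℝ)/2) * (∫⁻ a, G j a ^ (2:ℝ) ∂μ) ^ ((1:ℝ)/2) :=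
        ENNReal.lintegral_mul_le_Lp_mul_Lq μ two_two (hG i).aemeasurable (hG j).aemeasurable

lemma rpow_half_sq (x : ℝ≥0∞) : (x ^ (2:ℝ)) ^ ((1:ℝ)/2) = x := by
  rw [← ENNReal.rpow_mul]; norm_num

lemma core (n : ℕ) : ∀ {E V : Type} [Fintype E] [Fintype V]
    (S : V → E → Prop)
    (hcard : ∀ e : E, ∃ u w : V, ∀ i, S i e → i = u ∨ i = w)
    (F : V → (E → UI) → ℝ≥0∞) (_hmeas : ∀ i, Measurable (F i))
    (_hdep : ∀ i x y, (∀ e, S i e → x e = y e) → F i x = F i y),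
    Fintype.card E = n →
    ∫⁻ x : E → UI, ∏ i, F i x ≤ ∏ i, (∫⁻ x : E → UI, (F i x) ^ (2:ℝ)) ^ ((1:ℝ)/2) := by
  induction n with
  | zero =>
    intro E V _ _ S hcard F hmeas hdep hE
    have hemp : IsEmpty E := Fintype.card_eq_zero_iff.mp hE
    have huniq : Unique (E → UI) := ⟨⟨fun e => (hemp.elim e)⟩, fun x => funext fun e => (hemp.elim e)⟩
    have hconst : ∀ (G : (E → UI) → ℝ≥0∞), ∫⁻ x : E → UI, G x = G huniq.default := by
      intro G
      rw [show (fun x : E → UI => G x) = fun _ => G huniq.default from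
        funext fun x => by rw [huniq.uniq x]]
      simp
    rw [hconst]
    refine le_of_eq ?_
    refine Finset.prod_congr rfl fun i _ => ?_
    rw [hconst, rpow_half_sq]
  | succ n IH =>
    intro E V _ _ S hcard F hmeas hdep hE
    -- pick an edge
    have hne : Nonempty E := Fintype.card_pos_iff.mp (by omega)
    obtain ⟨e₀⟩ := hne
    obtain ⟨p, hpe⟩ : ∃ p : E → Prop, p = fun e => e = e₀ := ⟨_, rfl⟩
    set E' := {e : E // ¬ p e}
    have hE' : Fintype.card E' = n := by
      have h1 : Fintype.card {e : E // p e} = 1 := by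
        refine Fintype.card_eq_one_iff.mpr ⟨⟨e₀, by rw [hpe]⟩, fun y => Subtype.ext ?_⟩
        exact cast (congrFun hpe _) y.2
      have h2 := Fintype.card_subtype_compl p
      have h3 : Fintype.card E' = Fintype.card {x : E // ¬ p x} := rfl
      omega
    set φ := MeasurableEquiv.piEquivPiSubtypeProd (fun _ : E => UI) p with hφ
    have hmp : MeasurePreserving φ :=
      volume_preserving_piEquivPiSubtypeProd (fun _ : E => UI) p
    -- abbreviations
    set ψ : ({e : E // p e} → UI) → (E' → UI) → (E → UI) := fun a b => φ.symm (a, b) with hψ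
    have hψe : ∀ a b e, ψ a b e = if h : p e then a ⟨e, h⟩ else b ⟨e, h⟩ := by
      intro a b e
      simp [hψ, hφ, MeasurableEquiv.piEquivPiSubtypeProd,
        Equiv.piEquivPiSubtypeProd_symm_apply]
    have hψmeas : Measurable fun y : ({e : E // p e} → UI) × (E' → UI) => ψ y.1 y.2 := by
      simpa using φ.symm.measurable
    set a₀ : {e : E // p e} → UI := fun _ => ⟨0, by norm_num⟩ with ha₀
    set H : V → (E' → UI) → ℝ≥0∞ := fun i b =>
      (∫⁻ a : {e : E // p e} → UI, (F i (ψ a b)) ^ (2:ℝ)) ^ ((1:ℝ)/2) with hH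
    have hpE : ∀ e : E, p e → e = e₀ := fun e he => cast (congrFun hpe e) he
    have hpe₀ : p e₀ := cast (congrFun hpe e₀).symm rfl
    -- measurability of a ↦ F i (ψ a b)
    have ma : ∀ (i : V) (b : E' → UI), Measurable fun a => F i (ψ a b) := by
      intro i b
      exact (hmeas i).comp (hψmeas.comp (measurable_id.prodMk measurable_const))
    have mb : ∀ (i : V), Measurable fun y : ({e : E // p e} → UI) × (E' → UI) => F i (ψ y.1 y.2) :=
      fun i => (hmeas i).comp hψmeas
    -- independence from a for vertices not touching e₀
    have hindep : ∀ (i : V), ¬ S i e₀ → ∀ a a' b, F i (ψ a b) = F i (ψ a' b) := by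
      intro i hi a a' b
      refine hdep i _ _ fun e he => ?_
      rw [hψe, hψe]
      by_cases h : p e
      · exact absurd (by rw [← hpE e h]; exact he) hi
      · simp [h]
    have HnotT : ∀ (i : V), ¬ S i e₀ → ∀ b, H i b = F i (ψ a₀ b) := by
      intro i hi b
      rw [hH]
      simp only
      rw [lintegral_congr (fun a => by rw [hindep i hi a a₀ b]), lintegral_const,
        measure_univ, mul_one, rpow_half_sq]
    -- Step A : pointwise inner bound
    have stepA : ∀ b : E' → UI,
        ∫⁻ a : {e : E // p e} → UI, ∏ i, F i (ψ a b) ≤ ∏ i, H i b := by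
      intro b
      have hsplit : ∀ a, ∏ i, F i (ψ a b) =
          (∏ i ∈ univ.filter (fun i => S i e₀), F i (ψ a b)) *
          ∏ i ∈ univ.filter (fun i => ¬ S i e₀), H i b := by
        intro a
        rw [← Finset.prod_filter_mul_prod_filter_not univ (fun i => S i e₀)
          (fun i => F i (ψ a b))]
        congr 1
        refine Finset.prod_congr rfl fun i hi => ?_
        have hi' : ¬ S i e₀ := (Finset.mem_filter.mp hi).2
        rw [hindep i hi' a a₀ b, HnotT i hi' b]
      calc ∫⁻ a : {e : E // p e} → UI, ∏ i, F i (ψ a b)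
          = (∫⁻ a : {e : E // p e} → UI,
              ∏ i ∈ univ.filter (fun i => S i e₀), F i (ψ a b)) *
            ∏ i ∈ univ.filter (fun i => ¬ S i e₀), H i b := by
            rw [← lintegral_mul_const _ (Finset.measurable_prod _ (fun i _ => ma i b))]
            exact lintegral_congr fun a => hsplit a
        _ ≤ (∏ i ∈ univ.filter (fun i => S i e₀),
              (∫⁻ a : {e : E // p e} → UI, (F i (ψ a b)) ^ (2:ℝ)) ^ ((1:ℝ)/2)) *
            ∏ i ∈ univ.filter (fun i => ¬ S i e₀), H i b := by
            refine mul_le_mul_left ?_ _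
            refine CS2 volume _ ?_ _ (fun i => ma i b)
            obtain ⟨u, w, huw⟩ := hcard e₀
            have hsub : univ.filter (fun i => S i e₀) ⊆ {u, w} := by
              intro i hi
              rcases huw i (Finset.mem_filter.mp hi).2 with h | h
              · exact Finset.mem_insert.mpr (Or.inl h)
              · exact Finset.mem_insert.mpr (Or.inr (Finset.mem_singleton.mpr h))
            calc _ ≤ ({u, w} : Finset V).card := Finset.card_le_card hsub
              _ ≤ 2 := Finset.card_insert_le _ _ |>.trans (by simp)
        _ = ∏ i, H i b := by
            rw [← Finset.prod_filter_mul_prod_filter_not univ (fun i => S i e₀) (fun i => H i b)]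
    -- Step B : Fubini
    have measprod : ∀ (G : (E → UI) → ℝ≥0∞), Measurable G →
        ∫⁻ x : E → UI, G x =
        ∫⁻ b : E' → UI, ∫⁻ a : {e : E // p e} → UI, G (ψ a b) := by
      intro G hG
      have h1 : ∫⁻ x : E → UI, G x =
          ∫⁻ y : ({e : E // p e} → UI) × (E' → UI), G (φ.symm y) := by
        rw [← hmp.map_eq, lintegral_map (f := fun y => G (φ.symm y))
          (hG.comp φ.symm.measurable) φ.measurable]
        exact (lintegral_congr fun x => by rw [φ.symm_apply_apply]).symm
      rw [h1]
      exact lintegral_prod_symm _ ((hG.comp φ.symm.measurable)).aemeasurable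
    -- measurability of H
    have Hmeas : ∀ i, Measurable (H i) := by
      intro i
      rw [hH]
      refine Measurable.pow ?_ measurable_const
      exact Measurable.lintegral_prod_left ((mb i).pow measurable_const)
    -- dependency of H
    have Hdep : ∀ (i : V) (b b' : E' → UI),
        (∀ e' : E', S i e'.1 → b e' = b' e') → H i b = H i b' := by
      intro i b b' hbb
      rw [hH]
      simp only
      congr 1
      refine lintegral_congr fun a => ?_
      congr 1
      refine hdep i _ _ fun e he => ?_
      rw [hψe, hψe]
      by_cases h : p e
      · simp [h]
      · simpa [h] using hbb ⟨e, h⟩ he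
    -- apply IH
    have hIH := IH (fun i (e' : E') => S i e'.1) (fun e' => hcard e'.1) H Hmeas Hdep hE'
    -- Step E : identify the right-hand side
    have stepE : ∀ i, (∫⁻ b : E' → UI, (H i b) ^ (2:ℝ)) ^ ((1:ℝ)/2)
        = (∫⁻ x : E → UI, (F i x) ^ (2:ℝ)) ^ ((1:ℝ)/2) := by
      intro i
      congr 1
      rw [measprod _ ((hmeas i).pow measurable_const)]
      refine lintegral_congr fun b => ?_
      rw [hH]
      simp only
      rw [← ENNReal.rpow_mul]
      norm_num
    calc ∫⁻ x : E → UI, ∏ i, F i x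
        = ∫⁻ b : E' → UI, ∫⁻ a : {e : E // p e} → UI, ∏ i, F i (ψ a b) :=
          measprod _ (Finset.measurable_prod _ (fun i _ => hmeas i))
      _ ≤ ∫⁻ b : E' → UI, ∏ i, H i b := lintegral_mono fun b => stepA b
      _ ≤ ∏ i, (∫⁻ b : E' → UI, (H i b) ^ (2:ℝ)) ^ ((1:ℝ)/2) := hIH
      _ = ∏ i, (∫⁻ x : E → UI, (F i x) ^ (2:ℝ)) ^ ((1:ℝ)/2) :=
          Finset.prod_congr rfl fun i _ => stepE i


theorem edge_weighting_bound
    {V E : Type} [Fintype V] [Fintype E]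
    (ends : E → V × V) (hloop : ∀ e : E, (ends e).1 ≠ (ends e).2)
    (f : V → (E → UI) → ℝ)
    (hmeas : ∀ i, Measurable (f i))
    (hbdd : ∀ i, ∃ C : ℝ, ∀ x, |f i x| ≤ C)
    (hdep : ∀ (i : V) (x y : E → UI),
      (∀ e : E, ((ends e).1 = i ∨ (ends e).2 = i) → x e = y e) → f i x = f i y) :
    ∫ x : E → UI, ∏ i : V, f i x ≤
      ∏ i : V, (∫ x : E → UI, (f i x) ^ 2) ^ ((1 : ℝ) / 2) := by
  have x₀ : E → UI := fun _ => ⟨0, by norm_num⟩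
  set F : V → (E → UI) → ℝ≥0∞ := fun i x => ENNReal.ofReal |f i x| with hF
  have Fmeas : ∀ i, Measurable (F i) := fun i => ((hmeas i).abs).ennreal_ofReal
  have hcard : ∀ e : E, ∃ u w : V, ∀ i,
      ((ends e).1 = i ∨ (ends e).2 = i) → i = u ∨ i = w := by
    intro e
    exact ⟨(ends e).1, (ends e).2, fun i hi => by tauto⟩
  have Fdep : ∀ (i : V) (x y : E → UI),
      (∀ e : E, ((ends e).1 = i ∨ (ends e).2 = i) → x e = y e) → F i x = F i y := by
    intro i x y h
    rw [hF]; simp only; rw [hdep i x y h]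
  have hcore := core (Fintype.card E) (fun i e => (ends e).1 = i ∨ (ends e).2 = i)
    hcard F Fmeas Fdep rfl
  -- finiteness of the RHS
  have hfin : ∀ i, ∫⁻ x : E → UI, (F i x) ^ (2:ℝ) ≠ ⊤ := by
    intro i
    obtain ⟨C, hC⟩ := hbdd i
    have : ∫⁻ x : E → UI, (F i x) ^ (2:ℝ) ≤ ENNReal.ofReal C ^ (2:ℝ) := by
      calc ∫⁻ x : E → UI, (F i x) ^ (2:ℝ)
          ≤ ∫⁻ _ : E → UI, ENNReal.ofReal C ^ (2:ℝ) := by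
            refine lintegral_mono fun x => ?_
            exact ENNReal.rpow_le_rpow (ENNReal.ofReal_le_ofReal (hC x)) (by norm_num)
        _ = ENNReal.ofReal C ^ (2:ℝ) := by rw [lintegral_const, measure_univ, mul_one]
    refine ne_of_lt (lt_of_le_of_lt this ?_)
    exact ENNReal.rpow_lt_top_of_nonneg (by norm_num) ENNReal.ofReal_ne_top
  -- identify each factor of the RHS
  have hfactor : ∀ i, ((∫⁻ x : E → UI, (F i x) ^ (2:ℝ)) ^ ((1:ℝ)/2)).toReal
      = (∫ x : E → UI, (f i x) ^ 2) ^ ((1:ℝ)/2) := by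
    intro i
    have h1 : ∫ x : E → UI, (f i x) ^ 2
        = (∫⁻ x : E → UI, (F i x) ^ (2:ℝ)).toReal := by
      rw [integral_eq_lintegral_of_nonneg_ae (Filter.Eventually.of_forall fun x => sq_nonneg _)
        ((hmeas i).pow_const 2).aestronglyMeasurable]
      congr 1
      refine lintegral_congr fun x => ?_
      rw [hF]
      simp only
      rw [show (2:ℝ) = ((2:ℕ):ℝ) by norm_cast, ENNReal.rpow_natCast,
        ← ENNReal.ofReal_pow (abs_nonneg _), sq_abs]
    rw [h1, ← ENNReal.toReal_rpow]
  -- put everything together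
  calc ∫ x : E → UI, ∏ i : V, f i x
      ≤ |∫ x : E → UI, ∏ i : V, f i x| := le_abs_self _
    _ ≤ ∫ x : E → UI, ∏ i : V, |f i x| := by
        simpa [Real.norm_eq_abs, Finset.abs_prod] using
          norm_integral_le_integral_norm (fun x : E → UI => ∏ i : V, f i x)
    _ = (∫⁻ x : E → UI, ∏ i : V, F i x).toReal := by
        rw [integral_eq_lintegral_of_nonneg_ae
          (Filter.Eventually.of_forall fun x => Finset.prod_nonneg fun i _ => abs_nonneg _)
          (Finset.measurable_prod _ (fun i _ => (hmeas i).abs)).aestronglyMeasurable]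
        congr 1
        refine lintegral_congr fun x => ?_
        rw [ENNReal.ofReal_prod_of_nonneg fun i _ => abs_nonneg _]
    _ ≤ (∏ i : V, (∫⁻ x : E → UI, (F i x) ^ (2:ℝ)) ^ ((1:ℝ)/2)).toReal := by
        refine ENNReal.toReal_mono ?_ hcore
        exact ENNReal.prod_ne_top fun i _ =>
          (ENNReal.rpow_lt_top_of_nonneg (by norm_num) (hfin i)).ne
    _ = ∏ i : V, (∫ x : E → UI, (f i x) ^ 2) ^ ((1:ℝ)/2) := by
        rw [ENNReal.toReal_prod]
        exact Finset.prod_congr rfl fun i _ => hfactor i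


end
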